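/- For the diffusion iterates: if the step-size satisfies 0 < α ≤ 2/(μ + L), then for every time k ∈ ℕ, (Σ_{i=1}^n ‖x_i^{k+1} − x̄^{k+1}‖²)^{1/2} ≤ β·(Σ_{i=1}^n ‖x_i^k − x̄^k‖²)^{1/2} + αβL·√n·‖x̄^k − x̃^{k*}‖ + αβL·√n·Δ_x + αβ·√n·D. -/

import Mathlib

/-
Averaging with a doubly stochastic `W` preserves the mean, so the new deviation from consensus is
`W` applied to the zero-sum vector of deviations of the local gradient steps `yᵢ = xᵢ - α ∇fᵢ(xᵢ)`
from their mean, hence at most `β` times its ℓ² size; as the mean minimises the sum of squared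
distances, these deviations may be measured from `x̄ᵏ` instead. Then split
`yᵢ - x̄ᵏ = (yᵢ - (x̄ᵏ - α ∇fᵢ(x̄ᵏ))) - α (∇fᵢ(x̄ᵏ) - ∇fᵢ(x̃⁽ᵏ⁺¹⁾*)) - α ∇fᵢ(x̃⁽ᵏ⁺¹⁾*)`:
the gradient step of a convex `L`-smooth function is non-expansive for `α ≤ 2 / L` (by
co-coercivity of its gradient), the middle term is controlled by `L`-smoothness and the drift of
the optimum, and the last by `D`.
-/

open Finset

open scoped RealInnerProductSpace

theorem apply_zero_le_apply_one_of_hasDerivAt {φ φ' : ℝ → ℝ} (hφ : ∀ t, HasDerivAt φ (φ' t) t)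
    (hφ' : ∀ t ∈ Set.Ioo (0 : ℝ) 1, 0 ≤ φ' t) : φ 0 ≤ φ 1 := by
  have hmono : MonotoneOn φ (Set.Icc 0 1) :=
    monotoneOn_of_hasDerivWithinAt_nonneg (convex_Icc 0 1)
      (fun t _ => (hφ t).continuousAt.continuousWithinAt)
      (fun t _ => (hφ t).hasDerivWithinAt) (by simpa only [interior_Icc] using hφ')
  exact hmono (by simp) (by simp) zero_le_one

section Gradient

variable {E : Type*} [NormedAddCommGroup E] [InnerProductSpace ℝ E] [CompleteSpace E]
  {f : E → ℝ} {g : E → E}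

theorem hasDerivAt_comp_add_smul (hf : ∀ x, HasGradientAt f (g x) x) (x u : E) (t : ℝ) :
    HasDerivAt (fun s : ℝ => f (x + s • u)) ⟪g (x + t • u), u⟫ t := by
  have hline : HasDerivAt (fun s : ℝ => x + s • u) u t := by
    simpa using ((hasDerivAt_id t).smul_const u).const_add x
  exact (hf (x + t • u)).hasFDerivAt.comp_hasDerivAt t hline

theorem add_inner_sub_le_of_monotone_gradient (hf : ∀ x, HasGradientAt f (g x) x)
    (hmono : ∀ a b, 0 ≤ ⟪g a - g b, a - b⟫) (x y : E) :
    f x + ⟪g x, y - x⟫ ≤ f y := by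
  set u := y - x
  have hφ : ∀ t : ℝ, HasDerivAt (fun s : ℝ => f (x + s • u) - s * ⟪g x, u⟫)
      (⟪g (x + t • u), u⟫ - ⟪g x, u⟫) t := fun t =>
    (hasDerivAt_comp_add_smul hf x u t).sub (hasDerivAt_mul_const ⟪g x, u⟫)
  have h01 := apply_zero_le_apply_one_of_hasDerivAt hφ fun t ht => by
    have h := hmono (x + t • u) x
    rw [add_sub_cancel_left, inner_smul_right, inner_sub_left] at h
    exact nonneg_of_mul_nonneg_right h ht.1
  simp only [zero_smul, add_zero, zero_mul, sub_zero, one_smul, one_mul, u,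
    add_sub_cancel] at h01
  linarith

theorem le_add_inner_sub_add_of_lipschitz_gradient (hf : ∀ x, HasGradientAt f (g x) x) {L : ℝ}
    (hlip : ∀ a b, ‖g a - g b‖ ≤ L * ‖a - b‖) (x y : E) :
    f y ≤ f x + ⟪g x, y - x⟫ + L / 2 * ‖y - x‖ ^ 2 := by
  set u := y - x
  have hφ : ∀ t : ℝ, HasDerivAt
      (fun s : ℝ => f x + s * ⟪g x, u⟫ + L / 2 * s ^ 2 * ‖u‖ ^ 2 - f (x + s • u))
      (⟪g x, u⟫ + L * t * ‖u‖ ^ 2 - ⟪g (x + t • u), u⟫) t := fun t => by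
    have hquad := ((hasDerivAt_pow 2 t).const_mul (L / 2)).mul_const (‖u‖ ^ 2)
    refine ((((hasDerivAt_mul_const _).const_add (f x)).add hquad).sub
      (hasDerivAt_comp_add_smul hf x u t)).congr_deriv ?_
    norm_num only [pow_one]
    ring
  have h01 := apply_zero_le_apply_one_of_hasDerivAt hφ fun t ht => by
    have hcs : ⟪g (x + t • u) - g x, u⟫ ≤ ‖g (x + t • u) - g x‖ * ‖u‖ := real_inner_le_norm _ _
    have hg : ‖g (x + t • u) - g x‖ ≤ L * (t * ‖u‖) := by
      simpa [norm_smul, abs_of_pos ht.1] using hlip (x + t • u) x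
    rw [inner_sub_left] at hcs
    nlinarith [norm_nonneg u]
  simp only [zero_smul, add_zero, zero_mul, one_smul, one_mul, u, add_sub_cancel,
    sub_self, ne_eq, OfNat.ofNat_ne_zero, not_false_eq_true, zero_pow, mul_zero, one_pow] at h01
  linarith

theorem norm_sub_sq_le_mul_inner_of_lipschitz_gradient (hf : ∀ x, HasGradientAt f (g x) x)
    (hmono : ∀ a b, 0 ≤ ⟪g a - g b, a - b⟫) {L : ℝ} (hL : 0 < L)
    (hlip : ∀ a b, ‖g a - g b‖ ≤ L * ‖a - b‖) (x y : E) :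
    ‖g x - g y‖ ^ 2 ≤ L * ⟪g x - g y, x - y⟫ := by
  -- Sandwich `f` at the gradient step `b - L⁻¹ • (g b - g a)` between the two first-order bounds.
  have key : ∀ a b, f a + ⟪g a, b - a⟫ + (2 * L)⁻¹ * ‖g b - g a‖ ^ 2 ≤ f b := by
    intro a b
    set w := g b - g a
    have hlow := add_inner_sub_le_of_monotone_gradient hf hmono a (b - L⁻¹ • w)
    have hup := le_add_inner_sub_add_of_lipschitz_gradient hf hlip b (b - L⁻¹ • w)
    rw [sub_right_comm, inner_sub_right, real_inner_smul_right] at hlow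
    rw [sub_sub_cancel_left, inner_neg_right, real_inner_smul_right, norm_neg, norm_smul,
      Real.norm_of_nonneg (inv_nonneg.2 hL.le)] at hup
    have hw : ⟪g b, w⟫ - ⟪g a, w⟫ = ‖w‖ ^ 2 := by
      rw [← inner_sub_left, real_inner_self_eq_norm_sq]
    have hL0 : L ≠ 0 := hL.ne'
    field_simp at hlow hup ⊢
    nlinarith
  have hsum : ⟪g x, y - x⟫ + ⟪g y, x - y⟫ = -⟪g x - g y, x - y⟫ := by
    rw [← neg_sub x y, inner_neg_right, inner_sub_left]
    ring
  have hxy := key x y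
  have hyx := key y x
  rw [norm_sub_rev] at hxy
  have h : L⁻¹ * ‖g x - g y‖ ^ 2 ≤ ⟪g x - g y, x - y⟫ := by
    have : (2 * L)⁻¹ * ‖g x - g y‖ ^ 2 + (2 * L)⁻¹ * ‖g x - g y‖ ^ 2
        = L⁻¹ * ‖g x - g y‖ ^ 2 := by field_simp; ring
    linarith
  rwa [inv_mul_le_iff₀ hL] at h

theorem norm_gradient_step_sub_le (hf : ∀ x, HasGradientAt f (g x) x)
    (hmono : ∀ a b, 0 ≤ ⟪g a - g b, a - b⟫) {L : ℝ} (hL : 0 < L)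
    (hlip : ∀ a b, ‖g a - g b‖ ≤ L * ‖a - b‖) {α : ℝ} (hα : 0 ≤ α) (hαL : α * L ≤ 2)
    (x y : E) : ‖(x - α • g x) - (y - α • g y)‖ ≤ ‖x - y‖ := by
  have hco := norm_sub_sq_le_mul_inner_of_lipschitz_gradient hf hmono hL hlip x y
  have hpos := hmono x y
  have hstep : (x - α • g x) - (y - α • g y) = (x - y) - α • (g x - g y) := by
    rw [smul_sub]; abel
  rw [hstep, ← pow_le_pow_iff_left₀ (norm_nonneg _) (norm_nonneg _) two_ne_zero,
    norm_sub_sq_real, norm_smul, real_inner_smul_right, real_inner_comm, mul_pow,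
    Real.norm_of_nonneg hα]
  nlinarith [mul_le_mul_of_nonneg_left hco (sq_nonneg α), mul_nonneg hα hpos,
    mul_nonneg (sub_nonneg.2 hαL) (mul_nonneg hα hpos)]

end Gradient

section Norms

variable {ι : Type*} [Fintype ι] {E : Type*} [SeminormedAddCommGroup E]

theorem sqrt_sum_norm_add_sq_le (u v : ι → E) :
    √(∑ i, ‖u i + v i‖ ^ 2) ≤ √(∑ i, ‖u i‖ ^ 2) + √(∑ i, ‖v i‖ ^ 2) := by
  simpa only [PiLp.norm_eq_of_L2, WithLp.ofLp_add, Pi.add_apply] using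
    norm_add_le (WithLp.toLp 2 u : PiLp 2 fun _ : ι => E) (WithLp.toLp 2 v)

theorem sqrt_sum_norm_sq_le_sum_norm (v : ι → E) : √(∑ i, ‖v i‖ ^ 2) ≤ ∑ i, ‖v i‖ :=
  Real.sqrt_le_iff.2 ⟨sum_nonneg fun _ _ => norm_nonneg _,
    sum_sq_le_sq_sum_of_nonneg fun _ _ => norm_nonneg _⟩

theorem sqrt_sum_norm_sq_le_sqrt_card_mul (v : ι → E) {M : ℝ} (hM : 0 ≤ M)
    (hv : ∀ i, ‖v i‖ ≤ M) : √(∑ i, ‖v i‖ ^ 2) ≤ √(Fintype.card ι) * M := by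
  have hsum : ∑ i, ‖v i‖ ^ 2 ≤ Fintype.card ι * M ^ 2 := by
    simpa using sum_le_sum fun i (_ : i ∈ univ) => pow_le_pow_left₀ (norm_nonneg _) (hv i) 2
  calc √(∑ i, ‖v i‖ ^ 2) ≤ √(Fintype.card ι * M ^ 2) := Real.sqrt_le_sqrt hsum
    _ = √(Fintype.card ι) * M := by rw [Real.sqrt_mul (Nat.cast_nonneg _), Real.sqrt_sq hM]

end Norms

section Mean

variable {ι : Type*} [Fintype ι] {E : Type*} [NormedAddCommGroup E] [InnerProductSpace ℝ E]

noncomputable def mean (u : ι → E) : E := (Fintype.card ι : ℝ)⁻¹ • ∑ i, u i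

theorem sum_sub_mean_eq_zero (u : ι → E) : ∑ i, (u i - mean u) = 0 := by
  rcases isEmpty_or_nonempty ι with hι | hι
  · simp
  rw [sum_sub_distrib, sum_const, card_univ, mean, ← Nat.cast_smul_eq_nsmul ℝ, smul_smul,
    mul_inv_cancel₀ (Nat.cast_ne_zero.2 Fintype.card_ne_zero), one_smul, sub_self]

theorem sum_norm_sub_mean_sq_le (u : ι → E) (c : E) :
    ∑ i, ‖u i - mean u‖ ^ 2 ≤ ∑ i, ‖u i - c‖ ^ 2 := by
  have hsplit : ∑ i, ‖u i - c‖ ^ 2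
      = ∑ i, ‖u i - mean u‖ ^ 2 + Fintype.card ι * ‖mean u - c‖ ^ 2 := by
    have h : ∀ i, ‖u i - c‖ ^ 2
        = ‖u i - mean u‖ ^ 2 + 2 * ⟪u i - mean u, mean u - c⟫ + ‖mean u - c‖ ^ 2 := fun i => by
      rw [← norm_add_sq_real, sub_add_sub_cancel]
    simp only [h, sum_add_distrib, ← mul_sum, ← sum_inner, sum_sub_mean_eq_zero, inner_zero_left,
      mul_zero, add_zero, sum_const, card_univ, nsmul_eq_mul]
  rw [hsplit]
  exact le_add_of_nonneg_right (by positivity)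

theorem mean_sum_smul_eq_mean {W : ι → ι → ℝ} (hWcol : ∀ j, ∑ i, W i j = 1) (y : ι → E) :
    mean (fun i => ∑ j, W i j • y j) = mean y := by
  rw [mean, mean, sum_comm]
  simp only [← sum_smul, hWcol, one_smul]

theorem sum_smul_sub_mean {W : ι → ι → ℝ} (hWrow : ∀ i, ∑ j, W i j = 1) (y : ι → E) (i : ι) :
    ∑ j, W i j • (y j - mean y) = ∑ j, W i j • y j - mean y := by
  simp only [smul_sub, sum_sub_distrib, ← sum_smul, hWrow, one_smul]

theorem sqrt_sum_norm_mix_sub_mean_le {W : ι → ι → ℝ} (hWrow : ∀ i, ∑ j, W i j = 1)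
    (hWcol : ∀ j, ∑ i, W i j = 1) {β : ℝ}
    (hβ : ∀ v : ι → E, ∑ i, v i = 0 →
      √(∑ i, ‖∑ j, W i j • v j‖ ^ 2) ≤ β * √(∑ i, ‖v i‖ ^ 2)) (y : ι → E) :
    √(∑ i, ‖∑ j, W i j • y j - mean (fun i => ∑ j, W i j • y j)‖ ^ 2)
      ≤ β * √(∑ i, ‖y i - mean y‖ ^ 2) := by
  simpa only [mean_sum_smul_eq_mean hWcol, sum_smul_sub_mean hWrow] using
    hβ (fun j => y j - mean y) (sum_sub_mean_eq_zero y)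

end Mean

theorem sqrt_sum_norm_gradient_step_sub_le {ι : Type*} [Fintype ι] {E : Type*}
    [NormedAddCommGroup E] [InnerProductSpace ℝ E] [CompleteSpace E]
    {f : ι → E → ℝ} {g : ι → E → E} (hf : ∀ i x, HasGradientAt (f i) (g i x) x)
    (hmono : ∀ i a b, 0 ≤ ⟪g i a - g i b, a - b⟫) {L : ℝ} (hL : 0 < L)
    (hlip : ∀ i a b, ‖g i a - g i b‖ ≤ L * ‖a - b‖) {α : ℝ} (hα : 0 ≤ α) (hαL : α * L ≤ 2)
    (x : ι → E) (c z : E) :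
    √(∑ i, ‖x i - α • g i (x i) - c‖ ^ 2)
      ≤ √(∑ i, ‖x i - c‖ ^ 2) + √(Fintype.card ι) * (α * L * ‖c - z‖)
        + α * ∑ i, ‖g i z‖ := by
  have hsplit : ∀ i, x i - α • g i (x i) - c
      = ((x i - α • g i (x i)) - (c - α • g i c) + -(α • (g i c - g i z))) + -(α • g i z) :=
    fun i => by rw [smul_sub]; abel
  have hstep : ∀ i, ‖(x i - α • g i (x i)) - (c - α • g i c)‖ ≤ ‖x i - c‖ := fun i =>
    norm_gradient_step_sub_le (hf i) (hmono i) hL (hlip i) hα hαL (x i) c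
  have hdrift : ∀ i, ‖-(α • (g i c - g i z))‖ ≤ α * L * ‖c - z‖ := fun i => by
    rw [norm_neg, norm_smul, Real.norm_of_nonneg hα, mul_assoc]
    exact mul_le_mul_of_nonneg_left (hlip i c z) hα
  calc √(∑ i, ‖x i - α • g i (x i) - c‖ ^ 2)
      ≤ √(∑ i, ‖(x i - α • g i (x i)) - (c - α • g i c)‖ ^ 2)
        + √(∑ i, ‖-(α • (g i c - g i z))‖ ^ 2) + √(∑ i, ‖-(α • g i z)‖ ^ 2) := by
        simp only [hsplit]
        exact (sqrt_sum_norm_add_sq_le _ _).trans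
          (add_le_add_left (sqrt_sum_norm_add_sq_le _ _) _)
    _ ≤ √(∑ i, ‖x i - c‖ ^ 2) + √(Fintype.card ι) * (α * L * ‖c - z‖)
        + ∑ i, ‖-(α • g i z)‖ := by
        gcongr with i
        · exact hstep i
        · exact sqrt_sum_norm_sq_le_sqrt_card_mul _ (by positivity) hdrift
        · exact sqrt_sum_norm_sq_le_sum_norm _
    _ = √(∑ i, ‖x i - c‖ ^ 2) + √(Fintype.card ι) * (α * L * ‖c - z‖)
        + α * ∑ i, ‖g i z‖ := by
        simp only [norm_neg, norm_smul, Real.norm_of_nonneg hα, mul_sum]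

theorem diffusion_consensus_error_general
    (n d : ℕ)
    (μ L : ℝ) (hμ : 0 < μ) (hμL : μ ≤ L)
    (f : ℕ → Fin n → EuclideanSpace ℝ (Fin d) → ℝ)
    (g : ℕ → Fin n → EuclideanSpace ℝ (Fin d) → EuclideanSpace ℝ (Fin d))
    (hgrad : ∀ k i x, HasGradientAt (f k i) (g k i x) x)
    (hsc : ∀ k i x y, (inner ℝ (g k i x - g k i y) (x - y) : ℝ) ≥ μ * ‖x - y‖ ^ 2)
    (hsm : ∀ k i x y, ‖g k i x - g k i y‖ ≤ L * ‖x - y‖)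
    (xstar : ℕ → EuclideanSpace ℝ (Fin d))
    (Δx : ℝ)
    (hdrift : ∀ k, ‖xstar (k + 1) - xstar k‖ ≤ Δx)
    (D : ℝ)
    (hgradbound : ∀ k, (Real.sqrt n)⁻¹ * ∑ i, ‖g k i (xstar k)‖ ≤ D)
    (W : Fin n → Fin n → ℝ)
    (hWrow : ∀ i, ∑ j, W i j = 1)
    (hWcol : ∀ j, ∑ i, W i j = 1)
    (β : ℝ) (hβ0 : 0 ≤ β)
    (hβ : ∀ v : Fin n → EuclideanSpace ℝ (Fin d), (∑ i, v i) = 0 →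
      Real.sqrt (∑ i, ‖∑ j, W i j • v j‖ ^ 2) ≤ β * Real.sqrt (∑ i, ‖v i‖ ^ 2))
    (α : ℝ) (hα0 : 0 < α) (hα : α ≤ 2 / (μ + L))
    (x : ℕ → Fin n → EuclideanSpace ℝ (Fin d))
    (hx : ∀ k i, x (k + 1) i = ∑ j, W i j • (x k j - α • g (k + 1) j (x k j)))
    (xbar : ℕ → EuclideanSpace ℝ (Fin d))
    (hxbar : ∀ k, xbar k = (n : ℝ)⁻¹ • ∑ i, x k i)
    (k : ℕ) :
    Real.sqrt (∑ i, ‖x (k + 1) i - xbar (k + 1)‖ ^ 2) ≤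
      β * Real.sqrt (∑ i, ‖x k i - xbar k‖ ^ 2)
      + α * β * L * (Real.sqrt n * ‖xbar k - xstar k‖)
      + α * β * L * (Real.sqrt n * Δx)
      + α * β * (Real.sqrt n * D) := by
  have hL : 0 < L := hμ.trans_le hμL
  have hαL : α * L ≤ 2 := by
    nlinarith [(le_div_iff₀ (by linarith : 0 < μ + L)).1 hα]
  have hmono : ∀ i a b, 0 ≤ ⟪g (k + 1) i a - g (k + 1) i b, a - b⟫ := fun i a b =>
    (by positivity : 0 ≤ μ * ‖a - b‖ ^ 2).trans (hsc (k + 1) i a b)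
  have hmean : ∀ m, xbar m = mean (x m) := by simpa only [mean, Fintype.card_fin] using hxbar
  have hnext : ‖xbar k - xstar (k + 1)‖ ≤ ‖xbar k - xstar k‖ + Δx :=
    (norm_sub_le_norm_sub_add_norm_sub _ (xstar k) _).trans
      (by rw [norm_sub_rev (xstar k)]; linarith [hdrift k])
  have hgsum : ∑ i, ‖g (k + 1) i (xstar (k + 1))‖ ≤ √n * D := by
    rcases n.eq_zero_or_pos with rfl | hpos
    · simp
    rw [← inv_mul_le_iff₀ (by positivity)]
    exact hgradbound (k + 1)
  set y := fun j => x k j - α • g (k + 1) j (x k j)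
  calc √(∑ i, ‖x (k + 1) i - xbar (k + 1)‖ ^ 2)
      = √(∑ i, ‖∑ j, W i j • y j - mean (fun i => ∑ j, W i j • y j)‖ ^ 2) := by
        rw [hmean, funext (hx k)]
    _ ≤ β * √(∑ i, ‖y i - mean y‖ ^ 2) := sqrt_sum_norm_mix_sub_mean_le hWrow hWcol hβ y
    _ ≤ β * √(∑ i, ‖y i - xbar k‖ ^ 2) :=
        mul_le_mul_of_nonneg_left (Real.sqrt_le_sqrt (sum_norm_sub_mean_sq_le y (xbar k))) hβ0
    _ ≤ β * (√(∑ i, ‖x k i - xbar k‖ ^ 2) + √n * (α * L * ‖xbar k - xstar (k + 1)‖)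
          + α * ∑ i, ‖g (k + 1) i (xstar (k + 1))‖) := by
        gcongr
        simpa only [Fintype.card_fin] using sqrt_sum_norm_gradient_step_sub_le (hgrad (k + 1))
          hmono hL (hsm (k + 1)) hα0.le hαL (x k) (xbar k) (xstar (k + 1))
    _ ≤ β * (√(∑ i, ‖x k i - xbar k‖ ^ 2) + √n * (α * L * (‖xbar k - xstar k‖ + Δx))
          + α * (√n * D)) := by gcongr
    _ = _ := by ring

theorem diffusion_consensus_error
    (n d : ℕ) (hn : 1 ≤ n) (hd : 1 ≤ d)
    (μ L : ℝ) (hμ : 0 < μ) (hμL : μ ≤ L)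
    (f : ℕ → Fin n → EuclideanSpace ℝ (Fin d) → ℝ)
    (g : ℕ → Fin n → EuclideanSpace ℝ (Fin d) → EuclideanSpace ℝ (Fin d))
    (hgrad : ∀ k i x, HasGradientAt (f k i) (g k i x) x)
    (hsc : ∀ k i x y, (inner ℝ (g k i x - g k i y) (x - y) : ℝ) ≥ μ * ‖x - y‖ ^ 2)
    (hsm : ∀ k i x y, ‖g k i x - g k i y‖ ≤ L * ‖x - y‖)
    (xstar : ℕ → EuclideanSpace ℝ (Fin d))
    (hopt : ∀ k, ∑ i, g k i (xstar k) = 0)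
    (Δx : ℝ) (hΔx : 0 < Δx)
    (hdrift : ∀ k, ‖xstar (k + 1) - xstar k‖ ≤ Δx)
    (D : ℝ) (hD : 0 < D)
    (hgradbound : ∀ k, (Real.sqrt n)⁻¹ * ∑ i, ‖g k i (xstar k)‖ ≤ D)
    (W : Fin n → Fin n → ℝ)
    (hWnonneg : ∀ i j, 0 ≤ W i j)
    (hWrow : ∀ i, ∑ j, W i j = 1)
    (hWcol : ∀ j, ∑ i, W i j = 1)
    (β : ℝ) (hβ0 : 0 ≤ β) (hβ1 : β < 1)
    (hβ : ∀ v : Fin n → EuclideanSpace ℝ (Fin d), (∑ i, v i) = 0 →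
      Real.sqrt (∑ i, ‖∑ j, W i j • v j‖ ^ 2) ≤ β * Real.sqrt (∑ i, ‖v i‖ ^ 2))
    (α : ℝ) (hα0 : 0 < α) (hα : α ≤ 2 / (μ + L))
    (x : ℕ → Fin n → EuclideanSpace ℝ (Fin d))
    (hx : ∀ k i, x (k + 1) i = ∑ j, W i j • (x k j - α • g (k + 1) j (x k j)))
    (xbar : ℕ → EuclideanSpace ℝ (Fin d))
    (hxbar : ∀ k, xbar k = (n : ℝ)⁻¹ • ∑ i, x k i)
    (k : ℕ) :
    Real.sqrt (∑ i, ‖x (k + 1) i - xbar (k + 1)‖ ^ 2) ≤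
      β * Real.sqrt (∑ i, ‖x k i - xbar k‖ ^ 2)
      + α * β * L * (Real.sqrt n * ‖xbar k - xstar k‖)
      + α * β * L * (Real.sqrt n * Δx)
      + α * β * (Real.sqrt n * D) :=
  diffusion_consensus_error_general n d μ L hμ hμL f g hgrad hsc hsm xstar Δx hdrift D hgradbound W
    hWrow hWcol β hβ0 hβ α hα0 hα x hx xbar hxbar k
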